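/- Let g be the n×n block upper-triangular matrix [[z, y, x],[0, I_d, y'],[0, 0, w]] (blocks of sizes ℓ, d, ℓ) with z ∈ GL_ℓ(k). Then gᵀ J g = J if and only if the three conditions hold: w = K z^{−T} K, y' = −J'^{−1} yᵀ z^{−T} K, and xᵀ K w + y'ᵀ J' y' + wᵀ K x = 0. Moreover, any such g automatically has determinant 1, hence lies in SO(J). -/

import Mathlib

/-!
Both `gᵀ J g` and `J` are symmetric, so `gᵀ J g = J` amounts to three block equations:
`zᵀ K w = K`, `J' y' + yᵀ K w = 0`, and the vanishing of the bottom-right block.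
As `K` is the permutation matrix of `i ↦ ℓ - 1 - i`, `K * K = 1`; hence the first equation
solves to `w = K z⁻ᵀ K`, which turns the second into the formula for `y'`.
Taking determinants in `zᵀ K w = K` gives `det z * det w = 1`, and `det g = det z * det w`.
-/

open Matrix

noncomputable section

/-- Index type for the 3-block decomposition of size `ℓ + d + ℓ`. -/
abbrev Idx (ℓ d : ℕ) : Type := Fin ℓ ⊕ (Fin d ⊕ Fin ℓ)

variable {k : Type*} [Field k]

/-- The `n × n` matrix built out of nine blocks of sizes `ℓ, d, ℓ`. -/
def blk3 {ℓ d : ℕ}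
    (A : Matrix (Fin ℓ) (Fin ℓ) k) (B : Matrix (Fin ℓ) (Fin d) k) (C : Matrix (Fin ℓ) (Fin ℓ) k)
    (D : Matrix (Fin d) (Fin ℓ) k) (E : Matrix (Fin d) (Fin d) k) (F : Matrix (Fin d) (Fin ℓ) k)
    (G : Matrix (Fin ℓ) (Fin ℓ) k) (H : Matrix (Fin ℓ) (Fin d) k) (I : Matrix (Fin ℓ) (Fin ℓ) k) :
    Matrix (Idx ℓ d) (Idx ℓ d) k :=
  Matrix.fromBlocks A (Matrix.fromCols B C) (Matrix.fromRows D G) (Matrix.fromBlocks E F H I)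

/-- The `ℓ × ℓ` exchange matrix `K` (ones on the antidiagonal). -/
def exK (k : Type*) [Field k] (ℓ : ℕ) : Matrix (Fin ℓ) (Fin ℓ) k :=
  Matrix.of fun i j => if (i : ℕ) + (j : ℕ) = ℓ - 1 then 1 else 0

/-- The symmetric matrix `J = [[0,0,K],[0,J',0],[K,0,0]]`. -/
def Jmat {d : ℕ} (ℓ : ℕ) (J' : Matrix (Fin d) (Fin d) k) : Matrix (Idx ℓ d) (Idx ℓ d) k :=
  blk3 0 0 (exK k ℓ) 0 J' 0 (exK k ℓ) 0 0

/-- The special orthogonal group of an invertible symmetric matrix `S`: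
`SO(S) = {g : gᵀ S g = S, det g = 1}`. -/
def SO {m : Type*} [Fintype m] [DecidableEq m] (S : Matrix m m k) : Set (Matrix m m k) :=
  {g | gᵀ * S * g = S ∧ g.det = 1}

/-- Upper unitriangular matrices (the group `Z_ℓ`). -/
def IsUnitri {ℓ : ℕ} (z : Matrix (Fin ℓ) (Fin ℓ) k) : Prop :=
  (∀ i, z i i = 1) ∧ ∀ i j : Fin ℓ, (j : ℕ) < (i : ℕ) → z i j = 0

/-- The unipotent subgroup `V_ℓ ⊆ SO(J)`: elements of `SO(J)` of block form
`[[z, y, x], [0, I, y'], [0, 0, w]]` with `z` upper unitriangular. -/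
def Vl {d : ℕ} (ℓ : ℕ) (J' : Matrix (Fin d) (Fin d) k) :
    Set (Matrix (Idx ℓ d) (Idx ℓ d) k) :=
  {g | g ∈ SO (Jmat ℓ J') ∧ ∃ z y x y' w, IsUnitri z ∧ g = blk3 z y x 0 1 y' 0 0 w}

/-- The top-left `ℓ × ℓ` block `z` of a matrix. -/
def zBlk {ℓ d : ℕ} (g : Matrix (Idx ℓ d) (Idx ℓ d) k) : Matrix (Fin ℓ) (Fin ℓ) k :=
  Matrix.of fun i j => g (Sum.inl i) (Sum.inl j)

/-- The top-middle `ℓ × d` block `y` of a matrix. -/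
def yBlk {ℓ d : ℕ} (g : Matrix (Idx ℓ d) (Idx ℓ d) k) : Matrix (Fin ℓ) (Fin d) k :=
  Matrix.of fun i j => g (Sum.inl i) (Sum.inr (Sum.inl j))

/-- Sum of the superdiagonal entries `Σ_{i} z_{i, i+1}`. -/
def superdiag {ℓ : ℕ} (z : Matrix (Fin ℓ) (Fin ℓ) k) : k :=
  ∑ i : Fin ℓ, ∑ j : Fin ℓ, if (j : ℕ) = (i : ℕ) + 1 then z i j else 0

/-- The last row `y_ℓ` of an `ℓ × d` matrix (as a vector in `k^d`). -/
def lastRow {ℓ d : ℕ} (y : Matrix (Fin ℓ) (Fin d) k) : Fin d → k :=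
  fun j => ∑ i : Fin ℓ, if (i : ℕ) + 1 = ℓ then y i j else 0

/-- The Bessel character `χ_{w0}(g) = ψ(Σ_i z_{i,i+1} + y_ℓ J' w0)`. -/
def besselChar {ℓ d : ℕ} (ψ : AddChar k ℂˣ) (J' : Matrix (Fin d) (Fin d) k) (w0 : Fin d → k)
    (g : Matrix (Idx ℓ d) (Idx ℓ d) k) : ℂˣ :=
  ψ (superdiag (zBlk g) + lastRow (yBlk g) ⬝ᵥ J'.mulVec w0)

/-- The block-diagonal embedding `m : γ ↦ blockdiag(I_ℓ, γ, I_ℓ)`. -/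
def mEmb {d : ℕ} (ℓ : ℕ) (γ : Matrix (Fin d) (Fin d) k) : Matrix (Idx ℓ d) (Idx ℓ d) k :=
  blk3 1 0 0 0 γ 0 0 0 1

/-- The stabilizer `H_{w0} = {γ ∈ SO(J') : γ J' w0 = J' w0}`. -/
def Hstab {d : ℕ} (J' : Matrix (Fin d) (Fin d) k) (w0 : Fin d → k) :
    Set (Matrix (Fin d) (Fin d) k) :=
  {γ | γ ∈ SO J' ∧ γ.mulVec (J'.mulVec w0) = J'.mulVec w0}

/-- The Bessel subgroup `R_ℓ = {m(γ) v : γ ∈ H_{w0}, v ∈ V_ℓ}`. -/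
def Rl {d : ℕ} (ℓ : ℕ) (J' : Matrix (Fin d) (Fin d) k) (w0 : Fin d → k) :
    Set (Matrix (Idx ℓ d) (Idx ℓ d) k) :=
  {g | ∃ γ ∈ Hstab J' w0, ∃ v ∈ Vl ℓ J', g = mEmb ℓ γ * v}

/-- The superdiagonal of `z`, as a vector in `k^{ℓ-1}`. -/
def sdVec {ℓ : ℕ} (z : Matrix (Fin ℓ) (Fin ℓ) k) : Fin (ℓ - 1) → k :=
  fun i => z ⟨(i : ℕ), by have := i.isLt; omega⟩ ⟨(i : ℕ) + 1, by have := i.isLt; omega⟩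

/-- The projection of `V_ℓ` onto its abelianization `k^{ℓ-1} × k^d`,
`g ↦ ((z_{1,2}, …, z_{ℓ-1,ℓ}), y_ℓ)`. -/
def projVl {ℓ d : ℕ} (g : Matrix (Idx ℓ d) (Idx ℓ d) k) : (Fin (ℓ - 1) → k) × (Fin d → k) :=
  (sdVec (zBlk g), lastRow (yBlk g))

section Blocks

variable {R : Type*} {ℓ d : ℕ}
  {A A' : Matrix (Fin ℓ) (Fin ℓ) R} {B B' : Matrix (Fin ℓ) (Fin d) R} {C C' : Matrix (Fin ℓ) (Fin ℓ) R}
  {D D' : Matrix (Fin d) (Fin ℓ) R} {E E' : Matrix (Fin d) (Fin d) R} {F F' : Matrix (Fin d) (Fin ℓ) R}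
  {G G' : Matrix (Fin ℓ) (Fin ℓ) R} {H H' : Matrix (Fin ℓ) (Fin d) R} {I I' : Matrix (Fin ℓ) (Fin ℓ) R}

theorem blk3_mul [NonUnitalNonAssocSemiring R] :
    blk3 A B C D E F G H I * blk3 A' B' C' D' E' F' G' H' I' =
      blk3 (A * A' + B * D' + C * G') (A * B' + B * E' + C * H') (A * C' + B * F' + C * I')
        (D * A' + E * D' + F * G') (D * B' + E * E' + F * H') (D * C' + E * F' + F * I')
        (G * A' + H * D' + I * G') (G * B' + H * E' + I * H') (G * C' + H * F' + I * I') := by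
  ext (i | i | i) (j | j | j) <;>
    simp [blk3, mul_apply, Fintype.sum_sum_type, fromBlocks, fromCols, add_assoc]

theorem blk3_transpose :
    (blk3 A B C D E F G H I)ᵀ = blk3 Aᵀ Dᵀ Gᵀ Bᵀ Eᵀ Hᵀ Cᵀ Fᵀ Iᵀ := by
  simp only [blk3, fromBlocks_transpose, transpose_fromCols, transpose_fromRows]

theorem blk3_inj :
    blk3 A B C D E F G H I = blk3 A' B' C' D' E' F' G' H' I' ↔
      A = A' ∧ B = B' ∧ C = C' ∧ D = D' ∧ E = E' ∧ F = F' ∧ G = G' ∧ H = H' ∧ I = I' := by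
  simp only [blk3, fromBlocks_inj, fromCols_inj.eq_iff, fromRows_inj.eq_iff]
  tauto

theorem det_blk3_of_lower_eq_zero [CommRing R] :
    (blk3 A B C 0 E F 0 0 I).det = A.det * E.det * I.det := by
  rw [blk3, fromRows_zero, det_fromBlocks_zero₂₁, det_fromBlocks_zero₂₁, mul_assoc]

end Blocks

theorem exK_eq_permMatrix {ℓ : ℕ} : exK k ℓ = Fin.revPerm.permMatrix k := by
  ext i j
  have := i.isLt
  simp only [exK, of_apply, PEquiv.toMatrix_apply, Equiv.toPEquiv_apply, Option.mem_def,
    Option.some.injEq, Fin.revPerm_apply, Fin.ext_iff, Fin.val_rev]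
  congr 1
  exact propext (by omega)

theorem exK_transpose {ℓ : ℕ} : (exK k ℓ)ᵀ = exK k ℓ := by
  rw [exK_eq_permMatrix, transpose_permMatrix, Equiv.Perm.inv_def, Fin.revPerm_symm]

theorem exK_mul_exK {ℓ : ℕ} : exK k ℓ * exK k ℓ = 1 := by
  have hrev : Fin.revPerm * Fin.revPerm = (1 : Equiv.Perm (Fin ℓ)) := Equiv.ext Fin.rev_rev
  rw [exK_eq_permMatrix, ← permMatrix_mul, hrev, permMatrix_one]

theorem exK_mul_exK_mul {ℓ : ℕ} {m : Type*} (M : Matrix (Fin ℓ) m k) :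
    exK k ℓ * (exK k ℓ * M) = M := by
  rw [← Matrix.mul_assoc, exK_mul_exK, Matrix.one_mul]

section Congruence

variable {n m R : Type*} [Fintype n] [DecidableEq n] [CommRing R]

theorem mul_add_eq_zero_iff_eq_neg_inv_mul {A : Matrix n n R} {X B : Matrix n m R}
    (hA : IsUnit A.det) : A * X + B = 0 ↔ X = -(A⁻¹ * B) := by
  rw [add_eq_zero_iff_eq_neg]
  constructor
  · intro h
    rw [← nonsing_inv_mul_cancel_left A X hA, h, Matrix.mul_neg]
  · rintro rfl
    rw [Matrix.mul_neg, mul_nonsing_inv_cancel_left _ _ hA]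

theorem transpose_mul_mul_eq_self_iff {K z w : Matrix n n R} (hK : K * K = 1) (hz : IsUnit z.det) :
    zᵀ * K * w = K ↔ w = K * z⁻¹ᵀ * K := by
  have hzT : IsUnit zᵀ.det := by rwa [det_transpose]
  rw [transpose_nonsing_inv]
  constructor
  · intro h
    calc w = K * (zᵀ⁻¹ * (zᵀ * K * w)) := by
          rw [Matrix.mul_assoc zᵀ, nonsing_inv_mul_cancel_left _ _ hzT, ← Matrix.mul_assoc, hK,
            Matrix.one_mul]
      _ = K * zᵀ⁻¹ * K := by rw [h, Matrix.mul_assoc]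
  · rintro rfl
    simp only [Matrix.mul_assoc, ← Matrix.mul_assoc K K, hK, Matrix.one_mul,
      mul_nonsing_inv_cancel_left _ _ hzT]

theorem det_mul_det_eq_one_of_transpose_mul_mul_eq_self {K z w : Matrix n n R} (hK : IsUnit K.det)
    (h : zᵀ * K * w = K) : z.det * w.det = 1 := by
  have := congrArg det h
  rw [det_mul, det_mul, det_transpose, mul_right_comm] at this
  exact hK.mul_eq_right.mp this

end Congruence

section BlockTriangular

variable {ℓ d : ℕ} {J' : Matrix (Fin d) (Fin d) k} {z x w : Matrix (Fin ℓ) (Fin ℓ) k}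
  {y : Matrix (Fin ℓ) (Fin d) k} {y' : Matrix (Fin d) (Fin ℓ) k}

theorem transpose_mul_Jmat_mul_blk3 (hJ' : J'ᵀ = J') :
    (blk3 z y x 0 1 y' 0 0 w)ᵀ * Jmat ℓ J' * blk3 z y x 0 1 y' 0 0 w =
      blk3 0 0 (zᵀ * exK k ℓ * w) 0 J' (J' * y' + yᵀ * exK k ℓ * w)
        (zᵀ * exK k ℓ * w)ᵀ (J' * y' + yᵀ * exK k ℓ * w)ᵀ
        (xᵀ * exK k ℓ * w + y'ᵀ * J' * y' + wᵀ * exK k ℓ * x) := by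
  rw [Jmat, blk3_transpose, blk3_mul, blk3_mul]
  congr 1 <;>
    simp only [transpose_zero, transpose_one, transpose_add, transpose_mul, transpose_transpose, hJ',
      exK_transpose, Matrix.mul_zero, Matrix.zero_mul, Matrix.mul_one, Matrix.one_mul, add_zero,
      zero_add, Matrix.mul_assoc] <;>
    abel

theorem transpose_mul_Jmat_mul_blk3_eq_iff (hJ' : J'ᵀ = J') :
    (blk3 z y x 0 1 y' 0 0 w)ᵀ * Jmat ℓ J' * blk3 z y x 0 1 y' 0 0 w = Jmat ℓ J' ↔
      zᵀ * exK k ℓ * w = exK k ℓ ∧ J' * y' + yᵀ * exK k ℓ * w = 0 ∧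
        xᵀ * exK k ℓ * w + y'ᵀ * J' * y' + wᵀ * exK k ℓ * x = 0 := by
  rw [transpose_mul_Jmat_mul_blk3 hJ', Jmat, blk3_inj]
  constructor
  · rintro ⟨-, -, hC, -, -, hF, -, -, hQ⟩
    exact ⟨hC, hF, hQ⟩
  · rintro ⟨hC, hF, hQ⟩
    refine ⟨rfl, rfl, hC, rfl, rfl, hF, ?_, ?_, hQ⟩
    · rw [hC, exK_transpose]
    · rw [hF, transpose_zero]

end BlockTriangular

theorem blockTriangular_mem_SO_iff_general {k : Type*} [Field k] {ℓ d : ℕ}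
    (J' : Matrix (Fin d) (Fin d) k) (hJ'sym : J'ᵀ = J') (hJ'inv : IsUnit J')
    (z : Matrix (Fin ℓ) (Fin ℓ) k) (hz : IsUnit z)
    (y : Matrix (Fin ℓ) (Fin d) k) (x : Matrix (Fin ℓ) (Fin ℓ) k)
    (y' : Matrix (Fin d) (Fin ℓ) k) (w : Matrix (Fin ℓ) (Fin ℓ) k)
    (g : Matrix (Idx ℓ d) (Idx ℓ d) k) (hg : g = blk3 z y x 0 1 y' 0 0 w) :
    (gᵀ * Jmat ℓ J' * g = Jmat ℓ J' ↔
      (w = exK k ℓ * (z⁻¹)ᵀ * exK k ℓ ∧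
       y' = -(J'⁻¹ * yᵀ * (z⁻¹)ᵀ * exK k ℓ) ∧
       xᵀ * exK k ℓ * w + y'ᵀ * J' * y' + wᵀ * exK k ℓ * x = 0)) ∧
    (gᵀ * Jmat ℓ J' * g = Jmat ℓ J' → g.det = 1 ∧ g ∈ SO (Jmat ℓ J')) := by
  subst hg
  have hK : exK k ℓ * exK k ℓ = 1 := exK_mul_exK
  have hdet : (blk3 z y x 0 1 y' 0 0 w)ᵀ * Jmat ℓ J' * blk3 z y x 0 1 y' 0 0 w = Jmat ℓ J' →
      (blk3 z y x 0 1 y' 0 0 w).det = 1 := fun h => by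
    rw [det_blk3_of_lower_eq_zero, det_one, mul_one,
      det_mul_det_eq_one_of_transpose_mul_mul_eq_self (isUnit_det_of_left_inverse hK)
        ((transpose_mul_Jmat_mul_blk3_eq_iff hJ'sym).mp h).1]
  refine ⟨?_, fun h => ⟨hdet h, h, hdet h⟩⟩
  rw [transpose_mul_Jmat_mul_blk3_eq_iff hJ'sym,
    transpose_mul_mul_eq_self_iff hK ((isUnit_iff_isUnit_det z).mp hz)]
  refine and_congr_right fun hw => and_congr_left' ?_
  have hKw : yᵀ * exK k ℓ * w = yᵀ * (z⁻¹)ᵀ * exK k ℓ := by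
    simp only [hw, Matrix.mul_assoc, exK_mul_exK_mul]
  rw [hKw, mul_add_eq_zero_iff_eq_neg_inv_mul ((isUnit_iff_isUnit_det J').mp hJ'inv),
    Matrix.mul_assoc J'⁻¹, Matrix.mul_assoc J'⁻¹]

/-- characterization of `gᵀ J g = J` for a block upper-triangular `g`,
and the fact that any such `g` automatically has determinant `1`, hence lies in `SO(J)`. -/
theorem blockTriangular_mem_SO_iff {k : Type*} [Field k] {ℓ d : ℕ}
    (hl : 0 < ℓ) (hd : 0 < d)
    (J' : Matrix (Fin d) (Fin d) k) (hJ'sym : J'ᵀ = J') (hJ'inv : IsUnit J')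
    (z : Matrix (Fin ℓ) (Fin ℓ) k) (hz : IsUnit z)
    (y : Matrix (Fin ℓ) (Fin d) k) (x : Matrix (Fin ℓ) (Fin ℓ) k)
    (y' : Matrix (Fin d) (Fin ℓ) k) (w : Matrix (Fin ℓ) (Fin ℓ) k)
    (g : Matrix (Idx ℓ d) (Idx ℓ d) k) (hg : g = blk3 z y x 0 1 y' 0 0 w) :
    (gᵀ * Jmat ℓ J' * g = Jmat ℓ J' ↔
      (w = exK k ℓ * (z⁻¹)ᵀ * exK k ℓ ∧
       y' = -(J'⁻¹ * yᵀ * (z⁻¹)ᵀ * exK k ℓ) ∧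
       xᵀ * exK k ℓ * w + y'ᵀ * J' * y' + wᵀ * exK k ℓ * x = 0)) ∧
    (gᵀ * Jmat ℓ J' * g = Jmat ℓ J' → g.det = 1 ∧ g ∈ SO (Jmat ℓ J')) :=
  blockTriangular_mem_SO_iff_general J' hJ'sym hJ'inv z hz y x y' w g hg
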